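/- arXiv:quant-ph/0510086 — 3 statements merged into one kernel-verified Lean document; each statement's English description precedes it below -/
import Mathlib

section
/- For every ε > 0, the integral I(ε) := ∫_{-∞}^{∞} e^{-x²/2}/(x²+ε) dx equals π·√(e^ε/ε)·(1 − erf(√(ε/2))), where erf(x) = (2/√π)∫₀ˣ e^{-u²} du. -/
/-
For the weight `e^{-bx²}` (`b = 1/2` here), write `1/(x² + ε) = ∫₀^∞ e^{-(x² + ε)s} ds` and
swap the two integrals: the inner integral over `x` is Gaussian, leaving
`∫₀^∞ e^{-εs} √(π/(s + b)) ds`. The substitution `s = u²/ε - b` turns this into a multiple of the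
Gaussian tail `∫_{√(bε)}^∞ e^{-u²} du`, which is `1 - erf √(bε)` up to the factor `√π/2`.
-/

open MeasureTheory Real

/-- The error function `erf x = (2/√π) ∫₀ˣ e^{-u²} du`. -/
noncomputable def erf (x : ℝ) : ℝ := (2 / Real.sqrt π) * ∫ u in (0:ℝ)..x, Real.exp (-u ^ 2)

open Set Filter

lemma integral_Ioi_exp_neg_mul {c : ℝ} (hc : 0 < c) :
    ∫ s in Ioi (0 : ℝ), exp (-(c * s)) = c⁻¹ := by
  simpa only [mul_zero, integral_exp_neg_Ioi_zero, mul_one, smul_eq_mul] using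
    integral_comp_mul_left_Ioi (fun u => exp (-u)) 0 hc

lemma integral_Ioi_exp_neg_sq (a : ℝ) :
    ∫ u in Ioi a, exp (-u ^ 2) = √π / 2 * (1 - erf a) := by
  have hint : Integrable fun u : ℝ => exp (-u ^ 2) := by
    simpa using integrable_exp_neg_mul_sq one_pos
  have hhalf : ∫ u in Ioi (0 : ℝ), exp (-u ^ 2) = √π / 2 := by
    simpa using integral_gaussian_Ioi 1
  have hdiff := intervalIntegral.integral_Ioi_sub_Ioi' (a := 0) (b := a)
    hint.integrableOn hint.integrableOn
  have hπ : √π ≠ 0 := by positivity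
  rw [erf, ← hdiff, hhalf]
  field_simp
  ring

section
variable {b ε : ℝ}

lemma exp_neg_mul_sq_div_eq_integral (hε : 0 < ε) (x : ℝ) :
    exp (-b * x ^ 2) / (x ^ 2 + ε) =
      ∫ s in Ioi (0 : ℝ), exp (-(s + b) * x ^ 2) * exp (-(ε * s)) := by
  calc exp (-b * x ^ 2) / (x ^ 2 + ε)
      = exp (-b * x ^ 2) * ∫ s in Ioi (0 : ℝ), exp (-((x ^ 2 + ε) * s)) := by
        rw [integral_Ioi_exp_neg_mul (by positivity), div_eq_mul_inv]
    _ = ∫ s in Ioi (0 : ℝ), exp (-(s + b) * x ^ 2) * exp (-(ε * s)) := by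
        rw [← integral_const_mul]
        congr 1 with s
        rw [← exp_add, ← exp_add]
        ring_nf

lemma integrable_exp_neg_mul_sq_mul_exp_neg_mul (hb : 0 < b) (hε : 0 < ε) :
    Integrable (Function.uncurry fun x s => exp (-(s + b) * x ^ 2) * exp (-(ε * s)))
      (volume.prod (volume.restrict (Ioi (0 : ℝ)))) := by
  have hdom : Integrable (fun p : ℝ × ℝ => exp (-b * p.1 ^ 2) * exp (-(ε * p.2)))
      (volume.prod (volume.restrict (Ioi (0 : ℝ)))) :=
    (integrable_exp_neg_mul_sq hb).mul_prod
      (by simpa only [neg_mul] using (exp_neg_integrableOn_Ioi 0 hε).integrable)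
  refine hdom.mono (by fun_prop) ?_
  filter_upwards [Measure.quasiMeasurePreserving_snd.ae (ae_restrict_mem measurableSet_Ioi)]
    with p (hp : 0 < p.2)
  simp only [Function.uncurry, norm_mul, norm_of_nonneg (exp_pos _).le]
  gcongr
  nlinarith [sq_nonneg p.1]

lemma integral_exp_neg_mul_sq_div_eq_integral_Ioi (hb : 0 < b) (hε : 0 < ε) :
    ∫ x, exp (-b * x ^ 2) / (x ^ 2 + ε) =
      ∫ s in Ioi (0 : ℝ), exp (-(ε * s)) * √(π / (s + b)) := by
  simp_rw [exp_neg_mul_sq_div_eq_integral hε]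
  rw [integral_integral_swap (integrable_exp_neg_mul_sq_mul_exp_neg_mul hb hε)]
  refine setIntegral_congr_fun measurableSet_Ioi fun s _ => ?_
  rw [integral_mul_const, integral_gaussian, mul_comm]

lemma integral_Ioi_exp_neg_mul_mul_sqrt (hb : 0 < b) (hε : 0 < ε) :
    ∫ s in Ioi (0 : ℝ), exp (-(ε * s)) * √(π / (s + b)) =
      2 * √π * exp (b * ε) / √ε * ∫ u in Ioi √(b * ε), exp (-u ^ 2) := by
  set φ : ℝ → ℝ := fun u => u ^ 2 / ε - b
  have hmono : StrictMonoOn φ (Ici √(b * ε)) := fun u hu v hv huv => by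
    have := pow_left_strictMonoOn₀ two_ne_zero
      ((sqrt_nonneg _).trans hu) ((sqrt_nonneg _).trans hv) huv
    simp only [φ]; gcongr
  have himage : φ '' Ioi √(b * ε) = Ioi 0 := by
    rw [(by fun_prop : Continuous φ).continuousOn.image_Ioi_of_strictMonoOn hmono
      (tendsto_atTop_add_const_right _ _ ((tendsto_pow_atTop two_ne_zero).atTop_div_const hε))]
    simp only [φ, sq_sqrt (mul_pos hb hε).le]
    field_simp; simp
  have hderiv : ∀ u ∈ Ioi √(b * ε), HasDerivWithinAt φ (2 * u / ε) (Ioi √(b * ε)) u :=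
    fun u _ =>
      (((hasDerivAt_pow 2 u).div_const ε).sub_const b).hasDerivWithinAt.congr_deriv (by ring)
  rw [← himage, integral_image_eq_integral_abs_deriv_smul measurableSet_Ioi hderiv
    (hmono.injOn.mono Ioi_subset_Ici_self), ← integral_const_mul]
  refine setIntegral_congr_fun measurableSet_Ioi fun u (hu : √(b * ε) < u) => ?_
  have hu0 : 0 < u := (sqrt_nonneg _).trans_lt hu
  have hsqrt : √(π / (φ u + b)) = √π * √ε / u := by
    rw [show φ u + b = u ^ 2 / ε by simp only [φ]; ring, div_div_eq_mul_div,
      sqrt_div' _ (sq_nonneg u), sqrt_mul pi_pos.le, sqrt_sq hu0.le]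
  have hexp : exp (-(ε * φ u)) = exp (b * ε) * exp (-u ^ 2) := by
    rw [← exp_add]; congr 1; simp only [φ]; field_simp; ring
  have hε' : 0 < √ε := sqrt_pos.2 hε
  rw [hsqrt, hexp, smul_eq_mul, abs_of_pos (by positivity)]
  field_simp
  rw [sq_sqrt hε.le]

theorem integral_exp_neg_mul_sq_div_sq_add (hb : 0 < b) (hε : 0 < ε) :
    ∫ x, exp (-b * x ^ 2) / (x ^ 2 + ε) = π * exp (b * ε) / √ε * (1 - erf √(b * ε)) := by
  rw [integral_exp_neg_mul_sq_div_eq_integral_Ioi hb hε, integral_Ioi_exp_neg_mul_mul_sqrt hb hε,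
    integral_Ioi_exp_neg_sq]
  linear_combination exp (b * ε) / √ε * (1 - erf √(b * ε)) * mul_self_sqrt pi_pos.le

end

theorem stmt_0 (ε : ℝ) (hε : 0 < ε) :
    ∫ x : ℝ, Real.exp (-x ^ 2 / 2) / (x ^ 2 + ε) =
      π * Real.sqrt (Real.exp ε / ε) * (1 - erf (Real.sqrt (ε / 2))) := by
  have hsqrt : √(exp ε / ε) = exp (1 / 2 * ε) / √ε := by
    rw [sqrt_div (exp_pos ε).le, ← exp_half]; ring_nf
  have hexponent (x : ℝ) : -x ^ 2 / 2 = -(1 / 2) * x ^ 2 := by ring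
  simp_rw [hexponent]
  rw [integral_exp_neg_mul_sq_div_sq_add one_half_pos hε, hsqrt]
  ring_nf
end

section
/- For every ε > 0, the integral J(ε) := ∫_{-∞}^{∞} e^{-x²/2}/(x²+ε)² dx satisfies J(ε) = (√(2π) + (1−ε)·I(ε))/(2ε), where I(ε) := ∫_{-∞}^{∞} e^{-x²/2}/(x²+ε) dx. -/
/-! Differentiate `g x = x e^{-x²/2} / (x² + ε)`: its derivative is
`2ε e^{-x²/2}/(x²+ε)² + (ε - 1) e^{-x²/2}/(x²+ε) - e^{-x²/2}`. Both `g` and `g'` are integrable,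
so `∫ g' = 0`, and the Gaussian integral `∫ e^{-x²/2} = √(2π)` turns this into the identity. -/

open MeasureTheory Real

theorem integrable_exp_neg_sq_div_two : Integrable fun x : ℝ => exp (-x ^ 2 / 2) := by
  convert integrable_exp_neg_mul_sq (b := 1 / 2) (by norm_num) using 3
  ring

theorem integral_exp_neg_sq_div_two : ∫ x : ℝ, exp (-x ^ 2 / 2) = √(2 * π) := by
  convert integral_gaussian (1 / 2) using 4 <;> ring

theorem integrable_mul_exp_neg_sq_div_two : Integrable fun x : ℝ => x * exp (-x ^ 2 / 2) := by
  convert integrable_mul_exp_neg_mul_sq (b := 1 / 2) (by norm_num) using 4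
  ring

theorem MeasureTheory.Integrable.div_sq_add_pow {μ : Measure ℝ} {f : ℝ → ℝ} (hf : Integrable f μ)
    {ε : ℝ} (hε : 0 < ε) (n : ℕ) : Integrable (fun x => f x / (x ^ 2 + ε) ^ n) μ := by
  simp_rw [div_eq_mul_inv]
  refine hf.mul_bdd (c := (ε ^ n)⁻¹) (by fun_prop) (ae_of_all _ fun x => ?_)
  have hε_le : ε ≤ x ^ 2 + ε := le_add_of_nonneg_left (sq_nonneg x)
  rw [norm_inv, norm_pow, Real.norm_of_nonneg (by positivity)]
  exact inv_anti₀ (pow_pos hε n) (pow_le_pow_left₀ hε.le hε_le n)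

theorem hasDerivAt_mul_exp_neg_sq_div_two_div {ε x : ℝ} (hx : x ^ 2 + ε ≠ 0) :
    HasDerivAt (fun x => x * exp (-x ^ 2 / 2) / (x ^ 2 + ε))
      (2 * ε * (exp (-x ^ 2 / 2) / (x ^ 2 + ε) ^ 2) + (ε - 1) * (exp (-x ^ 2 / 2) / (x ^ 2 + ε))
        - exp (-x ^ 2 / 2)) x := by
  have hexp : HasDerivAt (fun x : ℝ => exp (-x ^ 2 / 2)) (exp (-x ^ 2 / 2) * (-x)) x := by
    refine (hasDerivAt_exp _).comp x ?_
    convert ((hasDerivAt_pow 2 x).neg).div_const 2 using 1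
    · ext; simp [neg_div]
    · ring
  have hden : HasDerivAt (fun x : ℝ => x ^ 2 + ε) (2 * x) x := by
    simpa using (hasDerivAt_pow 2 x).add_const ε
  refine (((hasDerivAt_id' x).mul hexp).div hden hx).congr_deriv ?_
  simp only [Pi.mul_apply]
  field_simp
  ring

theorem stmt_1 (ε : ℝ) (hε : 0 < ε) :
    ∫ x : ℝ, Real.exp (-x ^ 2 / 2) / (x ^ 2 + ε) ^ 2 =
      (Real.sqrt (2 * π) +
        (1 - ε) * ∫ x : ℝ, Real.exp (-x ^ 2 / 2) / (x ^ 2 + ε)) / (2 * ε) := by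
  have hJ := integrable_exp_neg_sq_div_two.div_sq_add_pow hε 2
  have hI : Integrable fun x : ℝ => exp (-x ^ 2 / 2) / (x ^ 2 + ε) := by
    simpa using integrable_exp_neg_sq_div_two.div_sq_add_pow hε 1
  have hzero := integral_eq_zero_of_hasDerivAt_of_integrable
    (fun x => hasDerivAt_mul_exp_neg_sq_div_two_div (ε := ε) (x := x) (by positivity))
    (((hJ.const_mul (2 * ε)).add (hI.const_mul (ε - 1))).sub integrable_exp_neg_sq_div_two)
    (by simpa using integrable_mul_exp_neg_sq_div_two.div_sq_add_pow hε 1)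
  rw [integral_sub (by exact (hJ.const_mul _).add (hI.const_mul _)) integrable_exp_neg_sq_div_two,
    integral_add (hJ.const_mul _) (hI.const_mul _), integral_const_mul, integral_const_mul,
    integral_exp_neg_sq_div_two] at hzero
  rw [eq_div_iff (by positivity)]
  linear_combination hzero
end

section
/- Let M : B → M₂(ℂ) be a unital completely positive map, and let Y, Ỹ be commuting self-adjoint elements of B with M(Y) = X and M(Ỹ) = X̃ self-adjoint in M₂(ℂ). Define σ² = ‖M(Y²) − M(Y)²‖ and σ̃² = ‖M(Ỹ²) − M(Ỹ)²‖. Then 2σσ̃ ≥ ‖[X, X̃]‖. -/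
/-!
For real `s`, the element `a = Y + (s i) Ỹ` satisfies `a⋆a = Y² + s² Ỹ²` because `Y` and `Ỹ`
commute, while `M(a⋆) M(a) = X² + s² X̃² + s i [X, X̃]`. The Schwarz inequality
`M(a⋆a) ≥ M(a⋆) M(a)` for the `2`-positive map `M`, applied at `s` and `-s`, squeezes `s i [X, X̃]`
between `±(D + s² D̃)`, where `D = M(Y²) - X²` and `D̃ = M(Ỹ²) - X̃²`. Hence
`|s| ‖[X, X̃]‖ ≤ ‖D‖ + s² ‖D̃‖` for all `s`, and a nonnegative quadratic in `s` has nonpositive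
discriminant: `‖[X, X̃]‖² ≤ 4 ‖D‖ ‖D̃‖`.
-/

open Matrix
open scoped Matrix.Norms.L2Operator ComplexOrder

/-- A linear map into `2×2` complex matrices is completely positive if all the
matrices `∑ᵢⱼ bᵢᴴ M(aᵢ* aⱼ) bⱼ` are positive semidefinite. -/
def IsCompletelyPositive {B : Type*} [NormedRing B] [StarRing B] [NormedAlgebra ℂ B]
    (M : B →ₗ[ℂ] Matrix (Fin 2) (Fin 2) ℂ) : Prop :=
  ∀ (n : ℕ) (a : Fin n → B) (b : Fin n → Matrix (Fin 2) (Fin 2) ℂ),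
    (∑ i, ∑ j, (b i)ᴴ * M (star (a i) * a j) * b j).PosSemidef

lemma le_two_mul_sqrt_mul_sqrt_of_forall_mul_le {a b c : ℝ}
    (h : ∀ s : ℝ, s * c ≤ a + s ^ 2 * b) : c ≤ 2 * √a * √b := by
  have ha : 0 ≤ a := by simpa using h 0
  have hdiscrim : discrim b (-c) a ≤ 0 :=
    discrim_le_zero fun s ↦ by linarith [h s]
  calc c ≤ |c| := le_abs_self c
    _ = √(c ^ 2) := (Real.sqrt_sq_eq_abs c).symm
    _ ≤ √(4 * a * b) := Real.sqrt_le_sqrt (by rw [discrim] at hdiscrim; linarith)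
    _ = 2 * √a * √b := by
      rw [Real.sqrt_mul (by positivity), Real.sqrt_mul (by norm_num),
        show (4 : ℝ) = 2 ^ 2 by norm_num, Real.sqrt_sq (by norm_num)]

lemma sub_smul_mul_add_smul {S R : Type*} [CommRing S] [Ring R] [Algebra S R] (z : S) (x y : R) :
    (x - z • y) * (x + z • y) = x ^ 2 + z • (x * y - y * x) - z ^ 2 • y ^ 2 := by
  simp only [sub_mul, mul_add, smul_mul_assoc, mul_smul_comm, smul_smul, sq, smul_sub]
  abel

lemma CStarAlgebra.norm_le_norm_of_neg_le_of_le {A : Type*} [CStarAlgebra A] [PartialOrder A]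
    [StarOrderedRing A] {a b : A} (h₁ : -b ≤ a) (h₂ : a ≤ b) : ‖a‖ ≤ ‖b‖ := by
  have hsum : IsSelfAdjoint (b + a) := .of_nonneg (by simpa [neg_le_iff_add_nonneg'] using h₁)
  have hdiff : IsSelfAdjoint (b - a) := .of_nonneg (sub_nonneg.mpr h₂)
  have ha : IsSelfAdjoint a := by
    convert (IsSelfAdjoint.all (2⁻¹ : ℝ)).smul (hsum.sub hdiff) using 1
    module
  have hb : IsSelfAdjoint b := by
    convert (IsSelfAdjoint.all (2⁻¹ : ℝ)).smul (hsum.add hdiff) using 1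
    module
  have hspec : ∀ x ∈ spectrum ℝ a, x ≤ ‖b‖ :=
    (le_algebraMap_iff_spectrum_le ha).mp (h₂.trans hb.le_algebraMap_norm_self)
  have hspec_neg : ∀ x ∈ spectrum ℝ a, -‖b‖ ≤ x :=
    (algebraMap_le_iff_le_spectrum ha).mp <| by
      simpa using (neg_le_neg hb.le_algebraMap_norm_self).trans h₁
  nontriviality A
  rcases CStarAlgebra.norm_or_neg_norm_mem_spectrum ha with h | h
  · exact hspec _ h
  · linarith [hspec_neg _ h]

lemma Matrix.norm_le_norm_of_posSemidef_sub_of_posSemidef_add {n : Type*} [Fintype n]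
    [DecidableEq n] {K P : Matrix n n ℂ} (h₁ : (P - K).PosSemidef) (h₂ : (P + K).PosSemidef) :
    ‖K‖ ≤ ‖P‖ := by
  open scoped MatrixOrder in
  exact CStarAlgebra.norm_le_norm_of_neg_le_of_le
    (le_iff.mpr <| by rwa [sub_neg_eq_add, add_comm]) (le_iff.mpr h₁)

namespace IsCompletelyPositive

variable {B : Type*} [NormedRing B] [StarRing B] [NormedAlgebra ℂ B]
  {M : B →ₗ[ℂ] Matrix (Fin 2) (Fin 2) ℂ}

lemma posSemidef_map_star_mul_sub (hMcp : IsCompletelyPositive M) (hM1 : M 1 = 1) (a : B) :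
    (M (star a * a) - M (star a) * M a).PosSemidef := by
  have h := hMcp 2 ![1, a] ![-M a, 1]
  simp only [Fin.sum_univ_two, cons_val_zero, cons_val_one, star_one, one_mul, mul_one, hM1,
    conjTranspose_neg, conjTranspose_one, Matrix.neg_mul, Matrix.mul_neg, neg_neg] at h
  convert h using 1
  abel

lemma posSemidef_variance_sub_smul_commutator [StarModule ℂ B] (hMcp : IsCompletelyPositive M)
    (hM1 : M 1 = 1) {Y Y' : B} (hY : IsSelfAdjoint Y) (hY' : IsSelfAdjoint Y')
    (hcomm : Y * Y' = Y' * Y) {z : ℂ} (hz : star z = -z) :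
    (M (Y ^ 2) - M Y ^ 2 - z ^ 2 • (M (Y' ^ 2) - M Y' ^ 2)
      - z • (M Y * M Y' - M Y' * M Y)).PosSemidef := by
  have hstar : star (Y + z • Y') = Y - z • Y' := by
    rw [star_add, star_smul, hY.star_eq, hY'.star_eq, hz, neg_smul, sub_eq_add_neg]
  have h := hMcp.posSemidef_map_star_mul_sub hM1 (Y + z • Y')
  rw [hstar, sub_smul_mul_add_smul, hcomm, sub_self, smul_zero, add_zero, map_sub, map_sub,
    map_add, map_smul, map_smul, sub_smul_mul_add_smul] at h
  convert h using 1
  module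

lemma abs_mul_norm_commutator_le [StarModule ℂ B] (hMcp : IsCompletelyPositive M)
    (hM1 : M 1 = 1) {Y Y' : B} (hY : IsSelfAdjoint Y) (hY' : IsSelfAdjoint Y')
    (hcomm : Y * Y' = Y' * Y) (s : ℝ) :
    |s| * ‖M Y * M Y' - M Y' * M Y‖ ≤
      ‖M (Y ^ 2) - M Y ^ 2‖ + s ^ 2 * ‖M (Y' ^ 2) - M Y' ^ 2‖ := by
  set z : ℂ := s * Complex.I
  have hz : star z = -z := by simp [z]
  have h₁ := hMcp.posSemidef_variance_sub_smul_commutator hM1 hY hY' hcomm hz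
  have h₂ := hMcp.posSemidef_variance_sub_smul_commutator hM1 hY hY' hcomm
    (z := -z) (by rw [star_neg, hz])
  rw [neg_sq, neg_smul, sub_neg_eq_add] at h₂
  calc |s| * ‖M Y * M Y' - M Y' * M Y‖ = ‖z • (M Y * M Y' - M Y' * M Y)‖ := by
        simp [z, norm_smul]
    _ ≤ ‖M (Y ^ 2) - M Y ^ 2 - z ^ 2 • (M (Y' ^ 2) - M Y' ^ 2)‖ :=
        norm_le_norm_of_posSemidef_sub_of_posSemidef_add h₁ h₂
    _ ≤ ‖M (Y ^ 2) - M Y ^ 2‖ + s ^ 2 * ‖M (Y' ^ 2) - M Y' ^ 2‖ := by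
        refine (norm_sub_le _ _).trans_eq ?_
        simp [z, norm_smul]

end IsCompletelyPositive

theorem stmt_12_general {B : Type*} [NormedRing B] [StarRing B]
    [NormedAlgebra ℂ B] [StarModule ℂ B]
    (M : B →ₗ[ℂ] Matrix (Fin 2) (Fin 2) ℂ) (hM1 : M 1 = 1)
    (hMcp : IsCompletelyPositive M)
    (Y Ytilde : B) (hY : IsSelfAdjoint Y) (hYt : IsSelfAdjoint Ytilde)
    (hcomm : Y * Ytilde = Ytilde * Y) :
    ‖M Y * M Ytilde - M Ytilde * M Y‖ ≤
      2 * Real.sqrt ‖M (Y ^ 2) - (M Y) ^ 2‖ * Real.sqrt ‖M (Ytilde ^ 2) - (M Ytilde) ^ 2‖ :=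
  le_two_mul_sqrt_mul_sqrt_of_forall_mul_le fun s ↦
    (mul_le_mul_of_nonneg_right (le_abs_self s) (norm_nonneg _)).trans
      (hMcp.abs_mul_norm_commutator_le hM1 hY hYt hcomm s)

theorem stmt_12 {B : Type*} [NormedRing B] [StarRing B] [CStarRing B]
    [NormedAlgebra ℂ B] [StarModule ℂ B]
    (M : B →ₗ[ℂ] Matrix (Fin 2) (Fin 2) ℂ) (hM1 : M 1 = 1)
    (hMcp : IsCompletelyPositive M)
    (Y Ytilde : B) (hY : IsSelfAdjoint Y) (hYt : IsSelfAdjoint Ytilde)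
    (hcomm : Y * Ytilde = Ytilde * Y)
    (hX : IsSelfAdjoint (M Y)) (hXt : IsSelfAdjoint (M Ytilde)) :
    ‖M Y * M Ytilde - M Ytilde * M Y‖ ≤
      2 * Real.sqrt ‖M (Y ^ 2) - (M Y) ^ 2‖ * Real.sqrt ‖M (Ytilde ^ 2) - (M Ytilde) ^ 2‖ :=
  stmt_12_general M hM1 hMcp Y Ytilde hY hYt hcomm
end
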